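/- Suppose s₀ : (0,T) → (0,∞) is differentiable and the function f = log ρ − ½U satisfies ∂_t f − |∇_v f|² + ⟨v, ∇_x f⟩ − h ≥ −n·s₀'(t)/(2·s₀(t)) for every t ∈ (0,T) and every point of ℝⁿ×ℝⁿ. For 0 < s < t < T and points x, y ∈ ℝⁿ×ℝⁿ, let c_{s,t}(x,y) be the infimum of ∫_s^t (¼|u(τ)|² − h(γ(τ))) dτ over all piecewise constant controls u : [s,t] → ℝⁿ and curves γ = (γ_x, γ_v) : [s,t] → ℝⁿ×ℝⁿ with γ_x' = γ_v, γ_v' = u (away from the finitely many switching times), γ(s) = x and γ(t) = y. Then ρ(t, y) ≥ (s₀(t)/s₀(s))^{−n/2} · e^{−c_{s,t}(x,y) + ½U(y) − ½U(x)} · ρ(s, x). -/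

import Mathlib

noncomputable section
open Real Set Matrix

/-- `ℝⁿ` with the Euclidean norm. -/
abbrev E (n : ℕ) := EuclideanSpace ℝ (Fin n)

/-- The standard basis of `ℝⁿ × ℝⁿ`, indexed by `Fin n ⊕ Fin n`: `Sum.inl i` is the `i`-th
`x`-direction and `Sum.inr i` is the `i`-th `v`-direction. -/
def stdBasis (n : ℕ) : Fin n ⊕ Fin n → E n × E n
  | Sum.inl i => (EuclideanSpace.single i 1, 0)
  | Sum.inr i => (0, EuclideanSpace.single i 1)

/-- Partial derivative of `φ : ℝⁿ × ℝⁿ → ℝ` in the `j`-th coordinate direction. -/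
def pd {n : ℕ} (φ : E n × E n → ℝ) (j : Fin n ⊕ Fin n) (p : E n × E n) : ℝ :=
  fderiv ℝ φ p (stdBasis n j)

/-- The full Hessian of `φ` in the variables `(x, v)`, as a `2n × 2n` matrix. -/
def Hess {n : ℕ} (φ : E n × E n → ℝ) (p : E n × E n) :
    Matrix (Fin n ⊕ Fin n) (Fin n ⊕ Fin n) ℝ :=
  Matrix.of fun i j => pd (pd φ j) i p

/-- The Laplacian in the `v`-variables: `Δ_v φ = Σᵢ ∂²φ/∂vᵢ²`. -/
def lapV {n : ℕ} (φ : E n × E n → ℝ) (p : E n × E n) : ℝ :=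
  ∑ i : Fin n, pd (pd φ (Sum.inr i)) (Sum.inr i) p

/-- The squared Euclidean norm of the full gradient `∇φ`. -/
def gradNormSq {n : ℕ} (φ : E n × E n → ℝ) (p : E n × E n) : ℝ :=
  ∑ j : Fin n ⊕ Fin n, (pd φ j p) ^ 2

/-- The function `h = -½⟨v, ∇ₓU⟩ + ½Δ_v U - ¼|∇_v U|²`. -/
def hfun {n : ℕ} (U : E n × E n → ℝ) (p : E n × E n) : ℝ :=
  -(1/2) * (∑ i : Fin n, p.2 i * pd U (Sum.inl i) p) + (1/2) * lapV U p
    - (1/4) * ∑ i : Fin n, (pd U (Sum.inr i) p) ^ 2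

/-- The block-diagonal matrix `[[a·I, 0], [0, b·I]]`. -/
def blockDiag (n : ℕ) (a b : ℝ) : Matrix (Fin n ⊕ Fin n) (Fin n ⊕ Fin n) ℝ :=
  Matrix.fromBlocks (a • 1) 0 0 (b • 1)

/-- The right-hand side `½·[[-(s₁/s₀)I, (s₂/s₀)I], [(s₂/s₀)I, -(s₀'/s₀)I]]` of the
matrix differential Harnack inequality. -/
def harnackMatrix (n : ℕ) (s₀ s₁ s₂ : ℝ → ℝ) (t : ℝ) :
    Matrix (Fin n ⊕ Fin n) (Fin n ⊕ Fin n) ℝ :=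
  (1/2 : ℝ) • Matrix.fromBlocks (-(s₁ t / s₀ t) • 1) ((s₂ t / s₀ t) • 1)
    ((s₂ t / s₀ t) • 1) (-(deriv s₀ t / s₀ t) • 1)

/-- `u` is piecewise constant on `[s, t]`: there is a partition of `[s, t]` on each of whose
open subintervals `u` is constant. -/
def PiecewiseConstantOn {F : Type*} (u : ℝ → F) (s t : ℝ) : Prop :=
  ∃ m : ℕ, ∃ τ : Fin (m + 1) → ℝ, τ 0 = s ∧ τ (Fin.last m) = t ∧ Monotone τ ∧
    ∀ k : Fin m, ∀ r ∈ Set.Ioo (τ k.castSucc) (τ k.succ),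
      ∀ r' ∈ Set.Ioo (τ k.castSucc) (τ k.succ), u r = u r'

/-- The set of costs `∫ₛᵗ (¼|u|² − h(γ)) dτ` of admissible controlled paths for the kinetic
control system `γₓ' = γ_v`, `γ_v' = u` joining `x` at time `s` to `y` at time `t`. -/
def admissibleCosts {n : ℕ} (U : E n × E n → ℝ) (s t : ℝ) (x y : E n × E n) : Set ℝ :=
  {c : ℝ | ∃ (u γx γv : ℝ → E n) (S : Finset ℝ),
    PiecewiseConstantOn u s t ∧
    ContinuousOn γv (Set.Icc s t) ∧
    (∀ r ∈ Set.Icc s t, HasDerivAt γx (γv r) r) ∧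
    (∀ r ∈ Set.Icc s t \ S, HasDerivAt γv (u r) r) ∧
    γx s = x.1 ∧ γv s = x.2 ∧ γx t = y.1 ∧ γv t = y.2 ∧
    c = ∫ r in s..t, (1/4 * ‖u r‖ ^ 2 - hfun U (γx r, γv r))}

/-- The optimal control cost `c_{s,t}(x, y)`. -/
def controlCost {n : ℕ} (U : E n × E n → ℝ) (s t : ℝ) (x y : E n × E n) : ℝ :=
  sInf (admissibleCosts U s t x y)

set_option maxHeartbeats 2000000

lemma stdBasis_inl {n : ℕ} (i : Fin n) :
    _root_.stdBasis n (Sum.inl i) = ((EuclideanSpace.single i 1 : E n), (0 : E n)) := rfl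

lemma stdBasis_inr {n : ℕ} (i : Fin n) :
    _root_.stdBasis n (Sum.inr i) = ((0 : E n), (EuclideanSpace.single i 1 : E n)) := rfl

lemma sum_single {n : ℕ} (w : E n) :
    ∑ i, w i • EuclideanSpace.single i (1:ℝ) = w := by
  simpa using (EuclideanSpace.basisFun (Fin n) ℝ).sum_repr w

lemma norm_sq_eq' {n : ℕ} (w : E n) : ‖w‖^2 = ∑ i, (w i)^2 := by
  rw [EuclideanSpace.norm_eq, Real.sq_sqrt (by positivity)]
  simp [Real.norm_eq_abs, sq_abs]

lemma clm_decomp {n : ℕ} (D : (ℝ × (E n × E n)) →L[ℝ] ℝ) (w₁ w₂ : E n) :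
    D (1, (w₁, w₂)) = D (1, 0)
      + (∑ i, w₁ i * D (0, _root_.stdBasis n (Sum.inl i)))
      + ∑ i, w₂ i * D (0, _root_.stdBasis n (Sum.inr i)) := by
  have key : ((1:ℝ), ((w₁, w₂) : E n × E n)) = ((1:ℝ), (0 : E n × E n))
      + (∑ i, w₁ i • (((0:ℝ), _root_.stdBasis n (Sum.inl i)) : ℝ × (E n × E n)))
      + ∑ i, w₂ i • (((0:ℝ), _root_.stdBasis n (Sum.inr i)) : ℝ × (E n × E n)) := by
    simp only [stdBasis_inl, stdBasis_inr, Prod.smul_mk, smul_zero, Prod.mk_add_mk,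
      Prod.ext_iff]
    refine ⟨by simp [Prod.fst_sum], ?_, ?_⟩
    · simp [Prod.fst_sum, Prod.snd_sum, sum_single w₁]
    · simp [Prod.fst_sum, Prod.snd_sum, sum_single w₂]
  rw [key, map_add, map_add, map_sum, map_sum]
  congr 1
  · congr 1
    refine Finset.sum_congr rfl fun i _ => ?_
    rw [_root_.map_smul, smul_eq_mul]
  · refine Finset.sum_congr rfl fun i _ => ?_
    rw [_root_.map_smul, smul_eq_mul]

lemma integrableOn_null' {f : ℝ → ℝ} {s : Set ℝ} (hs : MeasureTheory.volume s = 0) :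
    MeasureTheory.IntegrableOn f s := by
  unfold MeasureTheory.IntegrableOn
  rw [MeasureTheory.Measure.restrict_eq_zero.2 hs]
  exact MeasureTheory.integrable_zero_measure

/-- FTC inequality with a finite exceptional set. -/
lemma ftc_le (B : Finset ℝ) : ∀ (a b : ℝ) (g g' ψ : ℝ → ℝ), a ≤ b →
    ContinuousOn g (Icc a b) →
    (∀ x ∈ Ioo a b, x ∉ B → HasDerivAt g (g' x) x) →
    MeasureTheory.IntegrableOn ψ (Icc a b) →
    (∀ x ∈ Ioo a b, x ∉ B → g' x ≤ ψ x) →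
    g b - g a ≤ ∫ y in a..b, ψ y := by
  induction B using Finset.induction_on with
  | empty =>
    intro a b g g' ψ hab hcont hderiv hint hle
    exact intervalIntegral.sub_le_integral_of_hasDeriv_right_of_le hab hcont
      (fun x hx => (hderiv x hx (by simp)).hasDerivWithinAt) hint
      (fun x hx => hle x hx (by simp))
  | @insert c B' hc ih =>
    intro a b g g' ψ hab hcont hderiv hint hle
    by_cases hm : c ∈ Ioo a b
    · have h1 : g c - g a ≤ ∫ y in a..c, ψ y := by
        refine ih a c g g' ψ hm.1.le (hcont.mono (Icc_subset_Icc_right hm.2.le))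
          (fun x hx hxB => hderiv x (Ioo_subset_Ioo_right hm.2.le hx) ?_)
          (hint.mono_set (Icc_subset_Icc_right hm.2.le))
          (fun x hx hxB => hle x (Ioo_subset_Ioo_right hm.2.le hx) ?_) <;>
        simp [Finset.mem_insert, hxB, hx.2.ne]
      have h2 : g b - g c ≤ ∫ y in c..b, ψ y := by
        refine ih c b g g' ψ hm.2.le (hcont.mono (Icc_subset_Icc_left hm.1.le))
          (fun x hx hxB => hderiv x (Ioo_subset_Ioo_left hm.1.le hx) ?_)
          (hint.mono_set (Icc_subset_Icc_left hm.1.le))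
          (fun x hx hxB => hle x (Ioo_subset_Ioo_left hm.1.le hx) ?_) <;>
        simp [Finset.mem_insert, hxB, (hx.1.ne).symm]
      have hi1 : IntervalIntegrable ψ MeasureTheory.volume a c :=
        (hint.mono_set (by rw [uIcc_of_le hm.1.le]; exact Icc_subset_Icc_right hm.2.le)).intervalIntegrable
      have hi2 : IntervalIntegrable ψ MeasureTheory.volume c b :=
        (hint.mono_set (by rw [uIcc_of_le hm.2.le]; exact Icc_subset_Icc_left hm.1.le)).intervalIntegrable
      have := intervalIntegral.integral_add_adjacent_intervals hi1 hi2
      linarith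
    · refine ih a b g g' ψ hab hcont
        (fun x hx hxB => hderiv x hx ?_) hint (fun x hx hxB => hle x hx ?_) <;>
      · simp only [Finset.mem_insert, not_or]
        exact ⟨fun h => hm (h ▸ hx), hxB⟩

/-- A function piecewise-constant composed with any `g` is integrable. -/
lemma integrableOn_pc {F : Type*} [NormedAddCommGroup F] (u : ℝ → F) (g : F → ℝ)
    {m : ℕ} (τ : Fin (m + 1) → ℝ) (hmono : Monotone τ)
    (hconst : ∀ k : Fin m, ∀ r ∈ Set.Ioo (τ k.castSucc) (τ k.succ),
      ∀ r' ∈ Set.Ioo (τ k.castSucc) (τ k.succ), u r = u r') :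
    MeasureTheory.IntegrableOn (fun r => g (u r)) (Icc (τ 0) (τ (Fin.last m))) := by
  suffices H : ∀ j : ℕ, ∀ hj : j ≤ m, MeasureTheory.IntegrableOn (fun r => g (u r))
      (Icc (τ 0) (τ ⟨j, Nat.lt_succ_of_le hj⟩)) by
    have := H m le_rfl
    simpa [Fin.last] using this
  intro j
  induction j with
  | zero =>
    intro _
    have h0 : (⟨0, Nat.lt_succ_of_le (Nat.zero_le m)⟩ : Fin (m+1)) = 0 := rfl
    rw [h0, Icc_self]; exact integrableOn_null' (by simp)
  | succ j ihj =>
    intro hj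
    have hj' : j ≤ m := Nat.le_of_succ_le hj
    set A := τ ⟨j, Nat.lt_succ_of_le hj'⟩ with hA
    set Bp := τ ⟨j + 1, Nat.lt_succ_of_le hj⟩ with hB
    have hAB : A ≤ Bp := hmono (by simp [Fin.le_def])
    have piece : MeasureTheory.IntegrableOn (fun r => g (u r)) (Icc A Bp) := by
      rcases eq_or_lt_of_le hAB with h | h
      · rw [← h, Icc_self]; exact integrableOn_null' (by simp)
      · have hmid : (A + Bp) / 2 ∈ Ioo A Bp := ⟨by linarith, by linarith⟩
        have hae : (fun r => g (u r)) =ᵐ[MeasureTheory.volume.restrict (Ioo A Bp)]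
            (fun _ => g (u ((A + Bp) / 2))) := by
          filter_upwards [MeasureTheory.ae_restrict_mem measurableSet_Ioo] with r hr
          exact congrArg g (hconst ⟨j, Nat.lt_of_succ_le hj⟩ r (by
            simpa [Fin.castSucc, Fin.succ, hA, hB] using hr) _ (by
            simpa [Fin.castSucc, Fin.succ, hA, hB] using hmid))
        have : MeasureTheory.IntegrableOn (fun r => g (u r)) (Ioo A Bp) := by
          refine (MeasureTheory.integrableOn_const ?_).congr hae.symm
          simp [Real.volume_Ioo]
        exact this.congr_set_ae MeasureTheory.Ioo_ae_eq_Icc.symm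
    have hsub : Icc (τ 0) Bp ⊆ Icc (τ 0) A ∪ Icc A Bp := Icc_subset_Icc_union_Icc
    exact ((ihj hj').union piece).mono_set hsub

lemma pd_contDiff {n : ℕ} {φ : E n × E n → ℝ} (hφ : ContDiff ℝ (⊤ : ℕ∞) φ) (j : Fin n ⊕ Fin n) :
    ContDiff ℝ (⊤ : ℕ∞) (pd φ j) := by
  show ContDiff ℝ (⊤ : ℕ∞) fun p => fderiv ℝ φ p (_root_.stdBasis n j)
  exact (hφ.fderiv_right (m := (⊤ : ℕ∞)) (by simp)).clm_apply contDiff_const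

lemma hfun_continuous {n : ℕ} {U : E n × E n → ℝ} (hU : ContDiff ℝ (⊤ : ℕ∞) U) :
    Continuous (hfun U) := by
  have hpd : ∀ j, Continuous (pd U j) := fun j => (pd_contDiff hU j).continuous
  have hpd2 : ∀ j i, Continuous (fun p => pd (pd U j) i p) := fun j i =>
    (pd_contDiff (pd_contDiff hU j) i).continuous
  have hsnd : ∀ i : Fin n, Continuous (fun p : E n × E n => p.2 i) := fun i =>
    (continuous_apply i).comp ((PiLp.continuous_ofLp 2 _).comp continuous_snd)
  unfold hfun lapV
  refine Continuous.sub (Continuous.add ?_ ?_) ?_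
  · exact continuous_const.mul (continuous_finset_sum _ fun i _ => (hsnd i).mul (hpd _))
  · exact continuous_const.mul (continuous_finset_sum _ fun i _ => hpd2 _ _)
  · exact continuous_const.mul (continuous_finset_sum _ fun i _ => (hpd _).pow 2)

lemma hasDerivAt_q1 (s m : ℝ) (r : ℝ) :
    HasDerivAt (fun r' => (min r' m - s)^2/2 + (m - s)*(max r' m - m)) (min r m - s) r := by
  rcases lt_trichotomy r m with h | h | h
  · have hev : (fun r' => (min r' m - s)^2/2 + (m - s)*(max r' m - m))
        =ᶠ[nhds r] (fun r' => (r' - s)^2/2) := by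
      filter_upwards [Iio_mem_nhds h] with r' hr'
      rw [min_eq_left (le_of_lt hr'), max_eq_right (le_of_lt hr')]
      ring
    have hd : HasDerivAt (fun r' => (r' - s)^2/2) (min r m - s) r := by
      have := (((hasDerivAt_id r).sub_const s).pow 2).div_const 2
      refine this.congr_deriv ?_
      rw [min_eq_left h.le]; simp only [id_eq]; ring
    exact hd.congr_of_eventuallyEq hev
  · subst h
    have hleft : HasDerivWithinAt (fun r' => (min r' r - s)^2/2 + (r - s)*(max r' r - r))
        (r - s) (Iic r) r := by
      have hd : HasDerivAt (fun r' => (r' - s)^2/2) (r - s) r := by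
        have := (((hasDerivAt_id r).sub_const s).pow 2).div_const 2
        refine this.congr_deriv ?_; simp only [id_eq]; ring
      refine (hd.hasDerivWithinAt).congr (fun y hy => ?_) (by simp)
      rw [min_eq_left hy, max_eq_right hy]; ring
    have hright : HasDerivWithinAt (fun r' => (min r' r - s)^2/2 + (r - s)*(max r' r - r))
        (r - s) (Ici r) r := by
      have hd : HasDerivAt (fun r' => (r - s)^2/2 + (r - s)*(r' - r)) (r - s) r := by
        have := ((hasDerivAt_id r).sub_const r).const_mul (r - s)
        have h2 := (hasDerivAt_const r ((r - s)^2/2)).add this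
        refine h2.congr_deriv ?_; ring
      refine (hd.hasDerivWithinAt).congr (fun y hy => ?_) (by simp)
      rw [min_eq_right hy, max_eq_left hy]
    have := hleft.union hright
    rw [Iic_union_Ici] at this
    rw [min_self]
    exact this.hasDerivAt (by simp)
  · have hev : (fun r' => (min r' m - s)^2/2 + (m - s)*(max r' m - m))
        =ᶠ[nhds r] (fun r' => (m - s)^2/2 + (m - s)*(r' - m)) := by
      filter_upwards [Ioi_mem_nhds h] with r' hr'
      rw [min_eq_right (le_of_lt hr'), max_eq_left (le_of_lt hr')]
    have hd : HasDerivAt (fun r' => (m - s)^2/2 + (m - s)*(r' - m)) (min r m - s) r := by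
      have := (hasDerivAt_const r ((m - s)^2/2)).add
        (((hasDerivAt_id r).sub_const m).const_mul (m - s))
      refine this.congr_deriv ?_
      rw [min_eq_right h.le]; ring
    exact hd.congr_of_eventuallyEq hev

lemma hasDerivAt_q2 (m : ℝ) (r : ℝ) :
    HasDerivAt (fun r' => (max r' m - m)^2/2) (max r m - m) r := by
  rcases lt_trichotomy r m with h | h | h
  · have hev : (fun r' => (max r' m - m)^2/2) =ᶠ[nhds r] (fun _ => (0:ℝ)) := by
      filter_upwards [Iio_mem_nhds h] with r' hr'
      rw [max_eq_right (le_of_lt hr')]; ring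
    have hd : HasDerivAt (fun _ : ℝ => (0:ℝ)) (max r m - m) r := by
      have := hasDerivAt_const r (0:ℝ)
      refine this.congr_deriv ?_
      rw [max_eq_right h.le]; ring
    exact hd.congr_of_eventuallyEq hev
  · subst h
    have hleft : HasDerivWithinAt (fun r' => (max r' r - r)^2/2) 0 (Iic r) r := by
      refine ((hasDerivAt_const r (0:ℝ)).hasDerivWithinAt).congr (fun y hy => ?_) (by simp)
      rw [max_eq_right hy]; ring
    have hright : HasDerivWithinAt (fun r' => (max r' r - r)^2/2) 0 (Ici r) r := by
      have hd : HasDerivAt (fun r' => (r' - r)^2/2) 0 r := by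
        have := (((hasDerivAt_id r).sub_const r).pow 2).div_const 2
        refine this.congr_deriv ?_; simp only [id_eq]; ring
      refine (hd.hasDerivWithinAt).congr (fun y hy => ?_) (by simp)
      rw [max_eq_left hy]
    have := hleft.union hright
    rw [Iic_union_Ici] at this
    rw [max_self]
    simpa using this.hasDerivAt (by simp)
  · have hev : (fun r' => (max r' m - m)^2/2) =ᶠ[nhds r] (fun r' => (r' - m)^2/2) := by
      filter_upwards [Ioi_mem_nhds h] with r' hr'
      rw [max_eq_left (le_of_lt hr')]
    have hd : HasDerivAt (fun r' => (r' - m)^2/2) (max r m - m) r := by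
      have := (((hasDerivAt_id r).pow 2).div_const 2)
      have := (((hasDerivAt_id r).sub_const m).pow 2).div_const 2
      refine this.congr_deriv ?_
      rw [max_eq_left h.le]; simp only [id_eq]; ring
    exact hd.congr_of_eventuallyEq hev
set_option maxHeartbeats 1000000

section endpointAlg
variable {V : Type*} [AddCommGroup V] [Module ℝ V]

lemma endpoint_v (d : ℝ) (hd : d ≠ 0) (x1 x2 y1 y2 : V) :
    x2 + d • ((1/2 : ℝ) • ((2/d^2) • (y1 - x1 - (2*d) • x2) - (1/d) • (y2 - x2)))
      + d • ((1/d) • (y2 - x2) - (1/2 : ℝ) • ((2/d^2) • (y1 - x1 - (2*d) • x2) - (1/d) • (y2 - x2)))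
      = y2 := by
  match_scalars <;> (field_simp; try ring)

lemma endpoint_x (d : ℝ) (hd : d ≠ 0) (x1 x2 y1 y2 : V) :
    x1 + (2*d) • x2
      + (d^2/2 + d*d) • ((1/2 : ℝ) • ((2/d^2) • (y1 - x1 - (2*d) • x2) - (1/d) • (y2 - x2)))
      + (d^2/2) • ((1/d) • (y2 - x2) - (1/2 : ℝ) • ((2/d^2) • (y1 - x1 - (2*d) • x2) - (1/d) • (y2 - x2)))
      = y1 := by
  match_scalars <;> (field_simp; try ring)

end endpointAlg

lemma admissible_nonempty {n : ℕ} (U : E n × E n → ℝ) {s t : ℝ} (hst : s < t)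
    (x y : E n × E n) : (admissibleCosts U s t x y).Nonempty := by
  set d : ℝ := (t - s) / 2 with hd
  have hd0 : 0 < d := by simp only [hd]; linarith
  set m : ℝ := s + d with hm
  have hmt : m < t := by simp only [hm, hd]; linarith
  have hsm : s < m := by simp only [hm]; linarith
  set P : E n := (1/d) • (y.2 - x.2) with hP
  set Q : E n := (2/d^2) • (y.1 - x.1 - (2*d) • x.2) with hQ
  set a : E n := ((1:ℝ)/2) • (Q - P) with ha
  set b : E n := P - a with hb
  set u : ℝ → E n := fun r => if r < m then a else b with hu
  set γv : ℝ → E n := fun r => x.2 + (min r m - s) • a + (max r m - m) • b with hγv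
  set γx : ℝ → E n := fun r =>
    x.1 + (r - s) • x.2 + ((min r m - s)^2/2 + (m - s)*(max r m - m)) • a
      + ((max r m - m)^2/2) • b with hγx
  refine ⟨_, u, γx, γv, {m}, ?_, ?_, ?_, ?_, ?_, ?_, ?_, ?_, rfl⟩
  · -- piecewise constant
    refine ⟨2, fun k => s + (k : ℕ) * d, by simp, ?_, ?_, ?_⟩
    · show s + ((2:ℕ) : ℝ) * d = t
      push_cast; simp only [hd]; ring
    · intro k l hkl
      simp only
      have hkl' : ((k : ℕ) : ℝ) ≤ ((l : ℕ) : ℝ) := Nat.cast_le.2 hkl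
      nlinarith
    · intro k r hr r' hr'
      fin_cases k <;> simp only [Fin.castSucc, Fin.succ] at hr hr' <;>
        norm_num at hr hr'
      · have h1 : r < m := by simp only [hm]; linarith [hr.2]
        have h2 : r' < m := by simp only [hm]; linarith [hr'.2]
        simp [hu, h1, h2]
      · have h1 : ¬ r < m := by simp only [hm]; push_neg; linarith [hr.1]
        have h2 : ¬ r' < m := by simp only [hm]; push_neg; linarith [hr'.1]
        simp [hu, h1, h2]
  · -- continuity of γv
    apply Continuous.continuousOn
    refine ((continuous_const.add ?_).add ?_)
    · exact (((continuous_id.min continuous_const).sub continuous_const).smul continuous_const)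
    · exact (((continuous_id.max continuous_const).sub continuous_const).smul continuous_const)
  · -- derivative of γx
    intro r _
    have h1 : HasDerivAt (fun r' => r' - s) 1 r := by
      simpa using (hasDerivAt_id r).sub_const s
    have hq1 := hasDerivAt_q1 s m r
    have hq2 := hasDerivAt_q2 m r
    have := (((hasDerivAt_const r x.1).add (h1.smul_const x.2)).add
      (hq1.smul_const a)).add (hq2.smul_const b)
    refine this.congr_deriv ?_
    simp [hγv]
  · -- derivative of γv off {m}
    intro r hr
    simp only [Set.mem_diff, Finset.coe_singleton, Set.mem_singleton_iff] at hr
    rcases lt_or_gt_of_ne hr.2 with h | h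
    · have hev : γv =ᶠ[nhds r] (fun r' => x.2 + (r' - s) • a + (m - m) • b) := by
        filter_upwards [Iio_mem_nhds h] with r' hr'
        have hr'' : r' < m := hr'
        simp only [hγv, min_eq_left hr''.le, max_eq_right hr''.le]
      have hd1 : HasDerivAt (fun r' => x.2 + (r' - s) • a + (m - m) • b) (u r) r := by
        have h1 : HasDerivAt (fun r' : ℝ => r' - s) 1 r := by
          simpa using (hasDerivAt_id r).sub_const s
        have := ((hasDerivAt_const r x.2).add (h1.smul_const a)).add
          (hasDerivAt_const r ((m - m) • b))
        refine this.congr_deriv ?_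
        simp [hu, if_pos h]
      exact hd1.congr_of_eventuallyEq hev
    · have hev : γv =ᶠ[nhds r] (fun r' => x.2 + (m - s) • a + (r' - m) • b) := by
        filter_upwards [Ioi_mem_nhds h] with r' hr'
        have hr'' : m < r' := hr'
        simp only [hγv, min_eq_right hr''.le, max_eq_left hr''.le]
      have hd1 : HasDerivAt (fun r' => x.2 + (m - s) • a + (r' - m) • b) (u r) r := by
        have h1 : HasDerivAt (fun r' : ℝ => r' - m) 1 r := by
          simpa using (hasDerivAt_id r).sub_const m
        have := (hasDerivAt_const r (x.2 + (m - s) • a)).add (h1.smul_const b)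
        refine this.congr_deriv ?_
        simp [hu, if_neg (not_lt.2 h.le)]
      exact hd1.congr_of_eventuallyEq hev
  · -- γx s = x.1
    have h1 : min s m = s := min_eq_left hsm.le
    have h2 : max s m = m := max_eq_right hsm.le
    simp only [hγx, h1, h2, sub_self]
    simp
  · -- γv s = x.2
    have h1 : min s m = s := min_eq_left hsm.le
    have h2 : max s m = m := max_eq_right hsm.le
    simp only [hγv, h1, h2, sub_self]
    simp
  · -- γx t = y.1
    have h1 : min t m = m := min_eq_right hmt.le
    have h2 : max t m = t := max_eq_left hmt.le
    have hts : t - s = 2 * d := by simp only [hd]; ring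
    have htm : t - m = d := by simp only [hm, hd]; ring
    have hms : m - s = d := by simp only [hm]; ring
    have hd2 : (t - m)^2/2 = d^2/2 := by rw [htm]
    have hc1 : (m - s)^2/2 + (m - s)*(t - m) = d^2/2 + d*d := by rw [htm, hms]
    simp only [hγx, h1, h2, hts, hc1, hd2, ha, hb, hP, hQ]
    exact endpoint_x d hd0.ne' x.1 x.2 y.1 y.2
  · -- γv t = y.2
    have h1 : min t m = m := min_eq_right hmt.le
    have h2 : max t m = t := max_eq_left hmt.le
    have htm : t - m = d := by simp only [hm, hd]; ring
    have hms : m - s = d := by simp only [hm]; ring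
    simp only [hγv, h1, h2, htm, hms, ha, hb, hP, hQ]
    exact endpoint_v d hd0.ne' x.1 x.2 y.1 y.2
/-- **Harnack inequality** (Theorem 2.2): if `f = log ρ − ½U` satisfies the scalar
differential Harnack inequality, then
`ρ_t(y) ≥ (s₀(t)/s₀(s))^(−n/2) e^(−c_{s,t}(x,y) + ½U(y) − ½U(x)) ρ_s(x)`. -/
theorem harnack_inequality
    (n : ℕ) (hn : 1 ≤ n) (T : ℝ) (hT : 0 < T)
    (U : E n × E n → ℝ) (hU : ContDiff ℝ (⊤ : ℕ∞) U)
    (ρ : ℝ → E n × E n → ℝ)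
    (hρ : ContDiffOn ℝ (⊤ : ℕ∞) (fun q : ℝ × (E n × E n) => ρ q.1 q.2) (Ioo 0 T ×ˢ univ))
    (hpos : ∀ t ∈ Ioo 0 T, ∀ p : E n × E n, 0 < ρ t p)
    (hpde : ∀ t ∈ Ioo 0 T, ∀ p : E n × E n,
      deriv (fun τ => ρ τ p) t =
        lapV (ρ t) p - (∑ i : Fin n, pd U (Sum.inr i) p * pd (ρ t) (Sum.inr i) p)
          - ∑ i : Fin n, p.2 i * pd (ρ t) (Sum.inl i) p)
    (s₀ : ℝ → ℝ)
    (hs₀diff : ∀ t ∈ Ioo 0 T, DifferentiableAt ℝ s₀ t)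
    (hs₀pos : ∀ t ∈ Ioo 0 T, 0 < s₀ t)
    (hscalar : ∀ t ∈ Ioo 0 T, ∀ p : E n × E n,
      deriv (fun τ => Real.log (ρ τ p) - U p / 2) t
        - (∑ i : Fin n, (pd (fun q => Real.log (ρ t q) - U q / 2) (Sum.inr i) p) ^ 2)
        + (∑ i : Fin n, p.2 i * pd (fun q => Real.log (ρ t q) - U q / 2) (Sum.inl i) p)
        - hfun U p
      ≥ -(n : ℝ) * deriv s₀ t / (2 * s₀ t)) :
    ∀ s t : ℝ, 0 < s → s < t → t < T → ∀ x y : E n × E n,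
      ρ t y ≥ (s₀ t / s₀ s) ^ (-(n : ℝ) / 2) *
        Real.exp (-(controlCost U s t x y) + U y / 2 - U x / 2) * ρ s x := by

  intro s t hs hst htT x y
  have hIcc : Icc s t ⊆ Ioo 0 T := fun r hr =>
    ⟨lt_of_lt_of_le hs hr.1, lt_of_le_of_lt hr.2 htT⟩
  have hopen : IsOpen ((Ioo (0:ℝ) T) ×ˢ (univ : Set (E n × E n))) := isOpen_Ioo.prod isOpen_univ
  have hs0T : s ∈ Ioo 0 T := ⟨hs, hst.trans htT⟩
  have ht0T : t ∈ Ioo 0 T := ⟨hs.trans hst, htT⟩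
  -- the key estimate for each admissible cost
  have key : ∀ c ∈ admissibleCosts U s t x y,
      (Real.log (ρ s x) - U x / 2 + ((n:ℝ)/2) * Real.log (s₀ s))
        - (Real.log (ρ t y) - U y / 2 + ((n:ℝ)/2) * Real.log (s₀ t)) ≤ c := by
    rintro c ⟨u, γx, γv, S, ⟨mPC, τPC, hτ0, hτlast, hτmono, hτconst⟩, hγvc, hγxd, hγvd,
      hxs, hvs, hxt, hvt, hceq⟩
    subst hceq
    set g : ℝ → ℝ := fun τ =>
      -(Real.log (ρ τ (γx τ, γv τ)) - U (γx τ, γv τ) / 2 + ((n:ℝ)/2) * Real.log (s₀ τ))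
      with hg
    set g' : ℝ → ℝ := fun τ =>
      -((fderiv ℝ (fun q : ℝ × (E n × E n) => Real.log (ρ q.1 q.2) - U q.2 / 2)
          (τ, (γx τ, γv τ))) (1, (γv τ, u τ)) + ((n:ℝ)/2) * (deriv s₀ τ / s₀ τ)) with hg'
    have hγxc : ContinuousOn γx (Icc s t) := fun r hr =>
      ((hγxd r hr).continuousAt).continuousWithinAt
    have hcurve : ContinuousOn (fun r => ((r, (γx r, γv r)) : ℝ × (E n × E n))) (Icc s t) :=
      (continuousOn_id).prodMk (hγxc.prodMk hγvc)
    have hFc : ContinuousOn (fun q : ℝ × (E n × E n) => Real.log (ρ q.1 q.2) - U q.2 / 2)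
        ((Ioo (0:ℝ) T) ×ˢ univ) := by
      refine ContinuousOn.sub ?_ ?_
      · exact hρ.continuousOn.log (fun q hq => (hpos q.1 hq.1 q.2).ne')
      · exact ((hU.continuous.comp continuous_snd).continuousOn).div_const 2
    have hcont : ContinuousOn g (Icc s t) := by
      refine ContinuousOn.neg (ContinuousOn.add ?_ ?_)
      · exact hFc.comp hcurve (fun r hr => ⟨hIcc hr, mem_univ _⟩)
      · refine continuousOn_const.mul (ContinuousOn.log ?_ ?_)
        · exact fun r hr => ((hs₀diff r (hIcc hr)).continuousAt).continuousWithinAt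
        · exact fun r hr => (hs₀pos r (hIcc hr)).ne'
    have hint : MeasureTheory.IntegrableOn
        (fun r => 1/4 * ‖u r‖ ^ 2 - hfun U (γx r, γv r)) (Icc s t) := by
      have hn : MeasureTheory.IntegrableOn (fun r => ‖u r‖^2) (Icc s t) := by
        have := integrableOn_pc u (fun w => ‖w‖^2) τPC hτmono hτconst
        rwa [hτ0, hτlast] at this
      have hψ2 : ContinuousOn (fun r => hfun U (γx r, γv r)) (Icc s t) :=
        (hfun_continuous hU).comp_continuousOn (hγxc.prodMk hγvc)
      exact (hn.const_mul (1/4)).sub hψ2.integrableOn_Icc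
    have hderiv : ∀ τ ∈ Ioo s t, τ ∉ S → HasDerivAt g (g' τ) τ := by
      intro τ hτ hτS
      have hτIcc : τ ∈ Icc s t := ⟨hτ.1.le, hτ.2.le⟩
      have hτ0T : τ ∈ Ioo 0 T := hIcc hτIcc
      have hdiffρ : DifferentiableAt ℝ (fun q : ℝ × (E n × E n) => ρ q.1 q.2)
          (τ, (γx τ, γv τ)) :=
        (hρ.contDiffAt (hopen.mem_nhds ⟨hτ0T, mem_univ _⟩)).differentiableAt (by simp)
      have hUdiff : Differentiable ℝ (fun q : ℝ × (E n × E n) => U q.2) :=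
        (hU.differentiable (by simp)).comp differentiable_snd
      have hF : DifferentiableAt ℝ
          (fun q : ℝ × (E n × E n) => Real.log (ρ q.1 q.2) - U q.2 / 2) (τ, (γx τ, γv τ)) :=
        (hdiffρ.log (hpos τ hτ0T _).ne').sub (by
          simp only [div_eq_mul_inv]
          exact (hUdiff _).mul_const _)
      have hDt := hF.hasFDerivAt
      have hc : HasDerivAt (fun r => ((r, (γx r, γv r)) : ℝ × (E n × E n)))
          (1, (γv τ, u τ)) τ :=
        (hasDerivAt_id τ).prodMk ((hγxd τ hτIcc).prodMk (hγvd τ ⟨hτIcc, by simpa using hτS⟩))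
      have hlog : HasDerivAt (fun r => Real.log (ρ r (γx r, γv r)) - U (γx r, γv r) / 2)
          ((fderiv ℝ (fun q : ℝ × (E n × E n) => Real.log (ρ q.1 q.2) - U q.2 / 2)
            (τ, (γx τ, γv τ))) (1, (γv τ, u τ))) τ := by have := hDt.comp_hasDerivAt τ hc; exact this
      have hs₀' : HasDerivAt (fun r => ((n:ℝ)/2) * Real.log (s₀ r))
          (((n:ℝ)/2) * (deriv s₀ τ / s₀ τ)) τ :=
        (((hs₀diff τ hτ0T).hasDerivAt).log (hs₀pos τ hτ0T).ne').const_mul ((n:ℝ)/2)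
      exact (hlog.add hs₀').neg
    have hle : ∀ τ ∈ Ioo s t, τ ∉ S →
        g' τ ≤ 1/4 * ‖u τ‖ ^ 2 - hfun U (γx τ, γv τ) := by
      intro τ hτ hτS
      have hτIcc : τ ∈ Icc s t := ⟨hτ.1.le, hτ.2.le⟩
      have hτ0T : τ ∈ Ioo 0 T := hIcc hτIcc
      have hdiffρ : DifferentiableAt ℝ (fun q : ℝ × (E n × E n) => ρ q.1 q.2)
          (τ, (γx τ, γv τ)) :=
        (hρ.contDiffAt (hopen.mem_nhds ⟨hτ0T, mem_univ _⟩)).differentiableAt (by simp)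
      have hUdiff : Differentiable ℝ (fun q : ℝ × (E n × E n) => U q.2) :=
        (hU.differentiable (by simp)).comp differentiable_snd
      have hF : DifferentiableAt ℝ
          (fun q : ℝ × (E n × E n) => Real.log (ρ q.1 q.2) - U q.2 / 2) (τ, (γx τ, γv τ)) :=
        (hdiffρ.log (hpos τ hτ0T _).ne').sub (by
          simp only [div_eq_mul_inv]
          exact (hUdiff _).mul_const _)
      have hDt := hF.hasFDerivAt
      set D := fderiv ℝ (fun q : ℝ × (E n × E n) => Real.log (ρ q.1 q.2) - U q.2 / 2)
        (τ, (γx τ, γv τ)) with hD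
      have hsc := hscalar τ hτ0T (γx τ, γv τ)
      -- identify the time derivative
      have hA : deriv (fun τ' => Real.log (ρ τ' (γx τ, γv τ)) - U (γx τ, γv τ) / 2) τ
          = D (1, (0 : E n × E n)) := by
        have hslice : HasDerivAt (fun r : ℝ => ((r, (γx τ, γv τ)) : ℝ × (E n × E n)))
            (1, (0 : E n × E n)) τ := (hasDerivAt_id τ).prodMk (hasDerivAt_const τ _)
        exact (hDt.comp_hasDerivAt τ hslice).deriv
      -- identify the space derivatives
      have hsp : HasFDerivAt (fun q : E n × E n => Real.log (ρ τ q) - U q / 2)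
          (D.comp (ContinuousLinearMap.inr ℝ ℝ (E n × E n))) (γx τ, γv τ) :=
        hDt.comp (γx τ, γv τ) (hasFDerivAt_prodMk_right τ (γx τ, γv τ))
      have hB : ∀ j, pd (fun q => Real.log (ρ τ q) - U q / 2) j (γx τ, γv τ)
          = D ((0:ℝ), _root_.stdBasis n j) := by
        intro j
        show (fderiv ℝ (fun q => Real.log (ρ τ q) - U q / 2) (γx τ, γv τ)) (_root_.stdBasis n j)
          = D ((0:ℝ), _root_.stdBasis n j)
        rw [hsp.fderiv]
        simp
      simp only [hB] at hsc
      rw [hA] at hsc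
      try dsimp only at hsc
      -- assemble
      show -(D (1, (γv τ, u τ)) + ((n:ℝ)/2) * (deriv s₀ τ / s₀ τ))
        ≤ 1/4 * ‖u τ‖ ^ 2 - hfun U (γx τ, γv τ)
      rw [clm_decomp D (γv τ) (u τ), norm_sq_eq' (u τ)]
      have hsq : (0:ℝ) ≤ ∑ i, (D ((0:ℝ), _root_.stdBasis n (Sum.inr i)) + u τ i / 2)^2 :=
        Finset.sum_nonneg (fun i _ => sq_nonneg _)
      have hexp : ∑ i, (D ((0:ℝ), _root_.stdBasis n (Sum.inr i)) + u τ i / 2)^2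
          = (∑ i, (D ((0:ℝ), _root_.stdBasis n (Sum.inr i)))^2)
            + (∑ i, u τ i * D ((0:ℝ), _root_.stdBasis n (Sum.inr i)))
            + (1/4) * ∑ i, (u τ i)^2 := by
        rw [Finset.mul_sum, ← Finset.sum_add_distrib, ← Finset.sum_add_distrib]
        exact Finset.sum_congr rfl fun i _ => by ring
      have hsrel : ((n:ℝ)/2) * (deriv s₀ τ / s₀ τ) = -(-(n:ℝ) * deriv s₀ τ / (2 * s₀ τ)) := by
        field_simp
      linarith [hsq, hsc, hexp]
    have hmain := ftc_le S s t g g'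
      (fun r => 1/4 * ‖u r‖ ^ 2 - hfun U (γx r, γv r)) hst.le hcont hderiv hint hle
    have hgs : g s = -(Real.log (ρ s x) - U x / 2 + ((n:ℝ)/2) * Real.log (s₀ s)) := by
      simp only [hg, hxs, hvs, Prod.mk.eta]
    have hgt : g t = -(Real.log (ρ t y) - U y / 2 + ((n:ℝ)/2) * Real.log (s₀ t)) := by
      simp only [hg, hxt, hvt, Prod.mk.eta]
    rw [hgs, hgt] at hmain
    linarith
  -- conclude via the infimum
  have hne := admissible_nonempty U hst x y
  have hLB : (Real.log (ρ s x) - U x / 2 + ((n:ℝ)/2) * Real.log (s₀ s))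
      - (Real.log (ρ t y) - U y / 2 + ((n:ℝ)/2) * Real.log (s₀ t))
      ≤ controlCost U s t x y := le_csInf hne (fun c hc => key c hc)
  have hρs := hpos s hs0T x
  have hρt := hpos t ht0T y
  have hs₀s := hs₀pos s hs0T
  have hs₀t := hs₀pos t ht0T
  rw [ge_iff_le, Real.rpow_def_of_pos (div_pos hs₀t hs₀s)]
  nth_rewrite 1 [← Real.exp_log hρs]
  rw [← Real.exp_add, ← Real.exp_add, ← Real.exp_log hρt]
  refine Real.exp_le_exp.2 ?_
  have hlogdiv : Real.log (s₀ t / s₀ s) = Real.log (s₀ t) - Real.log (s₀ s) :=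
    Real.log_div hs₀t.ne' hs₀s.ne'
  rw [hlogdiv]
  ring_nf
  nlinarith [hLB]
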